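/- Let G be a finite simple graph, let C = {1,2,3,4} be a set of 4 colors, and consider a position (a partial proper coloring of G with colors from C) with Alice to move. Suppose G contains an edge uv with both u and v uncolored, where u and v each have degree at least 2 and each have at least 8 uncolored pendant neighbors, and suppose |Φ(u) ∩ Φ(v)| ≥ 2. Then the position is winning for Bob. -/

import Mathlib

namespace GCN

/-- The player whose turn it is. -/
inductive Player : Type
  | alice : Player
  | bob : Player

variable {V α : Type}

/-- A move consisting of coloring the uncolored vertex `v` with color `a` is legal in the
partial coloring `c` if `v` is uncolored and no neighbor of `v` has color `a`. -/
def legalMove (G : SimpleGraph V) (c : V → Option α) (v : V) (a : α) : Prop :=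
  c v = none ∧ ∀ u, G.Adj v u → c u ≠ some a

/-- The partial coloring obtained by coloring vertex `v` with color `a`. -/
def applyMove [DecidableEq V] (c : V → Option α) (v : V) (a : α) : V → Option α :=
  Function.update c v (some a)

/-- `BobWins G p c` : in the coloring game on `G` starting from the partial coloring `c` with
player `p` to move (the moving player must color an uncolored vertex properly whenever a legal
move exists; the game ends when no legal move exists), Bob has a strategy guaranteeing that the
game ends with some vertex uncolored. -/
inductive BobWins [DecidableEq V] (G : SimpleGraph V) : Player → (V → Option α) → Prop
  | endPos (p : Player) (c : V → Option α)
      (hend : ∀ v a, ¬ legalMove G c v a) (hunc : ∃ v, c v = none) : BobWins G p c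
  | aliceMove (c : V → Option α)
      (hmoves : ∃ v a, legalMove G c v a)
      (h : ∀ v a, legalMove G c v a → BobWins G .bob (applyMove c v a)) :
      BobWins G .alice c
  | bobMove (c : V → Option α) (v : V) (a : α)
      (hmove : legalMove G c v a)
      (h : BobWins G .alice (applyMove c v a)) : BobWins G .bob c

/-- `AliceWins G p c` : in the coloring game on `G` starting from the partial coloring `c` with
player `p` to move, Alice has a strategy guaranteeing that the game ends with all vertices
colored. -/
inductive AliceWins [DecidableEq V] (G : SimpleGraph V) : Player → (V → Option α) → Prop
  | endPos (p : Player) (c : V → Option α)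
      (hend : ∀ v a, ¬ legalMove G c v a) (hall : ∀ v, c v ≠ none) : AliceWins G p c
  | aliceMove (c : V → Option α) (v : V) (a : α)
      (hmove : legalMove G c v a)
      (h : AliceWins G .bob (applyMove c v a)) : AliceWins G .alice c
  | bobMove (c : V → Option α)
      (hmoves : ∃ v a, legalMove G c v a)
      (h : ∀ v a, legalMove G c v a → AliceWins G .alice (applyMove c v a)) :
      AliceWins G .bob c

/-- The game chromatic number of `G` : the least number `k` of colors such that Alice has a
winning strategy in the coloring game on `G` played with `k` colors (Alice moving first,
starting from the everywhere-uncolored position). -/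
noncomputable def gameChromaticNumber [DecidableEq V] (G : SimpleGraph V) : ℕ :=
  sInf {k : ℕ | AliceWins (α := Fin k) G .alice (fun _ => none)}

/-- `c` is a partial proper coloring of `G` : adjacent colored vertices get distinct colors. -/
def ProperPartial (G : SimpleGraph V) (c : V → Option α) : Prop :=
  ∀ ⦃u v : V⦄, G.Adj u v → ∀ a : α, c u = some a → c v ≠ some a

/-- `Phi G c v` : the set of colors appearing (under `c`) on the neighbors of `v`. -/
def Phi (G : SimpleGraph V) (c : V → Option α) (v : V) : Set α :=
  {a : α | ∃ u, G.Adj v u ∧ c u = some a}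

end GCN

/-!
An uncolored vertex that sees all colors but one is lost for Alice as soon as Bob is to move and
it has an uncolored pendant neighbor: Bob gives the missing color to that pendant (always legal,
its only neighbor being uncolored), and the vertex can never be colored afterwards.

With `k` colors, let `u` and `v` share `k - 2` of them. If Alice colors `u`, her color is new to
`v`, which then sees `k - 1` colors; symmetrically for `v`. Otherwise Bob colors a pendant
neighbor of `u` so that `u` sees `k - 1` colors. Now if Alice colors `u`, `v` sees `k - 1`
colors, and if she does not, `u` still does; either way Bob kills that vertex.
-/

namespace Set

theorem exists_card_le_ncard_insert_add {α : Type*} [Finite α] [Nonempty α] {s : Set α}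
    {n : ℕ} (h : Nat.card α ≤ s.ncard + (n + 1)) :
    ∃ e, Nat.card α ≤ (insert e s).ncard + n := by
  by_cases hs : s = univ
  · exact ⟨Classical.arbitrary α, by simp [hs]⟩
  · obtain ⟨e, he⟩ := (ne_univ_iff_exists_notMem s).mp hs
    exact ⟨e, by rw [ncard_insert_of_notMem he]; omega⟩

end Set

namespace GCN

open Set

variable {V α : Type} {G : SimpleGraph V} {c : V → Option α} {t x y : V} {a : α}

theorem ne_of_eq_some_of_eq_none {b : α} (hy : c y = some b) (hx : c x = none) : y ≠ x := by
  rintro rfl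
  simp_all

theorem not_legalMove_of_mem_Phi (h : a ∈ Phi G c t) : ¬ legalMove G c t a := by
  rintro ⟨-, hlegal⟩
  obtain ⟨z, hz, hcz⟩ := h
  exact hlegal z hz hcz

section DecidableEq

variable [DecidableEq V]

theorem applyMove_of_ne (h : y ≠ x) : applyMove c x a y = c y :=
  Function.update_of_ne h _ _

theorem setOf_applyMove_eq_none :
    {y | applyMove c x a y = none} = {y | c y = none} \ {x} := by
  ext y
  by_cases hyx : y = x <;> simp [applyMove, hyx]

variable (G) in
theorem Phi_subset_Phi_applyMove (hx : c x = none) (t : V) (a : α) :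
    Phi G c t ⊆ Phi G (applyMove c x a) t := by
  rintro b ⟨z, hz, hcz⟩
  exact ⟨z, hz, by rwa [applyMove_of_ne (ne_of_eq_some_of_eq_none hcz hx)]⟩

theorem Phi_applyMove_of_adj (hx : c x = none) (h : G.Adj t x) :
    Phi G (applyMove c x a) t = insert a (Phi G c t) := by
  refine Subset.antisymm ?_ (insert_subset ⟨x, h, by simp [applyMove]⟩
    (Phi_subset_Phi_applyMove G hx t a))
  rintro b ⟨z, hz, hcz⟩
  by_cases hzx : z = x
  · subst hzx
    simp_all [applyMove]
  · exact Or.inr ⟨z, hz, by rwa [applyMove_of_ne hzx] at hcz⟩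

theorem ncard_inter_Phi_lt_ncard_Phi_applyMove [Finite α] (hmove : legalMove G c x a)
    (h : G.Adj t x) : (Phi G c x ∩ Phi G c t).ncard < (Phi G (applyMove c x a) t).ncard := by
  have ha : a ∉ Phi G c x ∩ Phi G c t := fun ha => not_legalMove_of_mem_Phi ha.1 hmove
  rw [Phi_applyMove_of_adj hmove.1 h, ← Nat.add_one_le_iff, ← ncard_insert_of_notMem ha]
  exact ncard_le_ncard (insert_subset_insert inter_subset_right)

theorem BobWins.of_Phi_eq_univ [Finite V] (ht : c t = none) (hPhi : Phi G c t = univ)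
    (p : Player) : BobWins G p c := by
  induction hn : {y | c y = none}.ncard using Nat.strong_induction_on generalizing c p with
  | _ n ih =>
  by_cases hmoves : ∃ x a, legalMove G c x a
  · have hnext : ∀ x a, legalMove G c x a → ∀ q, BobWins G q (applyMove c x a) := by
      intro x a hmove q
      have htx : t ≠ x := by
        rintro rfl
        exact not_legalMove_of_mem_Phi (hPhi ▸ mem_univ a) hmove
      refine ih _ ?_ (by rwa [applyMove_of_ne htx])
        (univ_subset_iff.mp (hPhi ▸ Phi_subset_Phi_applyMove G hmove.1 t a)) q rfl
      rw [← hn, setOf_applyMove_eq_none]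
      exact ncard_sdiff_singleton_lt_of_mem hmove.1
    cases p with
    | alice => exact .aliceMove c hmoves fun x a hmove => hnext x a hmove _
    | bob =>
      obtain ⟨x, a, hmove⟩ := hmoves
      exact .bobMove c x a hmove (hnext x a hmove _)
  · push Not at hmoves
    exact .endPos p c hmoves ⟨t, ht⟩

theorem BobWins.alice_of_forall_legalMove (ht : c t = none)
    (h : ∀ x a, legalMove G c x a → BobWins G .bob (applyMove c x a)) : BobWins G .alice c := by
  by_cases hmoves : ∃ x a, legalMove G c x a
  · exact .aliceMove c hmoves h
  · push Not at hmoves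
    exact .endPos _ c hmoves ⟨t, ht⟩

variable (G) in
theorem ncard_inter_Phi_le_applyMove [Finite α] (hx : c x = none) (t s : V) (a : α) :
    (Phi G c t ∩ Phi G c s).ncard ≤
      (Phi G (applyMove c x a) t ∩ Phi G (applyMove c x a) s).ncard :=
  ncard_le_ncard (inter_subset_inter (Phi_subset_Phi_applyMove G hx t a)
    (Phi_subset_Phi_applyMove G hx s a))

end DecidableEq

section Pendants

variable [Fintype V] [DecidableRel G.Adj] {w z : V}

def uncoloredPendants (G : SimpleGraph V) [DecidableRel G.Adj] (c : V → Option α) (t : V) :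
    Set V :=
  {w | G.Adj t w ∧ G.degree w = 1 ∧ c w = none}

theorem eq_of_mem_uncoloredPendants (hw : w ∈ uncoloredPendants G c t) (hz : G.Adj w z) : z = t :=
  (G.degree_eq_one_iff_existsUnique_adj.mp hw.2.1).unique hz hw.1.symm

theorem legalMove_of_mem_uncoloredPendants (hw : w ∈ uncoloredPendants G c t) (ht : c t = none)
    (a : α) : legalMove G c w a :=
  ⟨hw.2.2, fun z hz => by simp [eq_of_mem_uncoloredPendants hw hz, ht]⟩

variable [DecidableEq V]

variable (G) in
theorem ncard_uncoloredPendants_le_applyMove (c : V → Option α) (t x : V) (a : α) :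
    (uncoloredPendants G c t).ncard ≤ (uncoloredPendants G (applyMove c x a) t).ncard + 1 :=
  calc (uncoloredPendants G c t).ncard
      ≤ (uncoloredPendants G c t \ {x}).ncard + ({x} : Set V).ncard :=
        ncard_le_ncard_sdiff_add_ncard _ _
    _ ≤ (uncoloredPendants G (applyMove c x a) t).ncard + 1 := by
        rw [ncard_singleton]
        refine Nat.add_le_add_right (ncard_le_ncard ?_) 1
        rintro w ⟨⟨hadj, hdeg, hw⟩, hwx⟩
        exact ⟨hadj, hdeg, by rwa [applyMove_of_ne hwx]⟩

theorem exists_mem_uncoloredPendants_applyMove (h : 2 ≤ (uncoloredPendants G c t).ncard)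
    (x : V) (a : α) : ∃ w, w ∈ uncoloredPendants G (applyMove c x a) t :=
  nonempty_of_ncard_ne_zero <| by
    have := ncard_uncoloredPendants_le_applyMove G c t x a
    omega

variable [Finite α] [Nonempty α]

theorem BobWins.bob_of_mem_uncoloredPendants (ht : c t = none) (hw : w ∈ uncoloredPendants G c t)
    (hcard : Nat.card α ≤ (Phi G c t).ncard + 1) : BobWins G .bob c := by
  obtain ⟨g, hg⟩ := exists_card_le_ncard_insert_add (n := 0) hcard
  refine .bobMove c w g (legalMove_of_mem_uncoloredPendants hw ht g)
    (.of_Phi_eq_univ (t := t) ?_ ?_ _)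
  · rwa [applyMove_of_ne (G.ne_of_adj hw.1)]
  · rw [Phi_applyMove_of_adj hw.2.2 hw.1]
    exact eq_of_subset_of_ncard_le (subset_univ _) (by rwa [ncard_univ])

theorem BobWins.bob_applyMove_of_adj (hmove : legalMove G c x a) (h : G.Adj t x)
    (ht : c t = none) (hcard : Nat.card α ≤ (Phi G c x ∩ Phi G c t).ncard + 2)
    (hpend : 2 ≤ (uncoloredPendants G c t).ncard) : BobWins G .bob (applyMove c x a) := by
  obtain ⟨w, hw⟩ := exists_mem_uncoloredPendants_applyMove hpend x a
  refine .bob_of_mem_uncoloredPendants (by rwa [applyMove_of_ne (G.ne_of_adj h)]) hw ?_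
  have := ncard_inter_Phi_lt_ncard_Phi_applyMove hmove h
  omega

variable {u v : V}

theorem BobWins.alice_of_card_le_ncard_Phi (huv : G.Adj u v) (hu : c u = none)
    (hv : c v = none) (hcommon : Nat.card α ≤ (Phi G c u ∩ Phi G c v).ncard + 2)
    (hcard : Nat.card α ≤ (Phi G c u).ncard + 1) (hpu : 2 ≤ (uncoloredPendants G c u).ncard)
    (hpv : 2 ≤ (uncoloredPendants G c v).ncard) : BobWins G .alice c := by
  refine .alice_of_forall_legalMove hu fun y b hmove => ?_
  by_cases hyu : y = u
  · subst hyu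
    exact .bob_applyMove_of_adj hmove huv.symm hv hcommon hpv
  · obtain ⟨w, hw⟩ := exists_mem_uncoloredPendants_applyMove hpu y b
    refine .bob_of_mem_uncoloredPendants (by rwa [applyMove_of_ne (Ne.symm hyu)]) hw ?_
    have := ncard_le_ncard (Phi_subset_Phi_applyMove G hmove.1 u b)
    omega

theorem BobWins.alice_of_card_le_ncard_inter_Phi (huv : G.Adj u v) (hu : c u = none)
    (hv : c v = none) (hcommon : Nat.card α ≤ (Phi G c u ∩ Phi G c v).ncard + 2)
    (hpu : 4 ≤ (uncoloredPendants G c u).ncard) (hpv : 4 ≤ (uncoloredPendants G c v).ncard) :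
    BobWins G .alice c := by
  refine .alice_of_forall_legalMove hu fun x a hmove => ?_
  by_cases hxu : x = u
  · subst hxu
    exact .bob_applyMove_of_adj hmove huv.symm hv hcommon (by omega)
  by_cases hxv : x = v
  · subst hxv
    exact .bob_applyMove_of_adj hmove huv hu (by rwa [inter_comm]) (by omega)
  have hcommon' := ncard_inter_Phi_le_applyMove G hmove.1 u v a
  have hpu' := ncard_uncoloredPendants_le_applyMove G c u x a
  have hpv' := ncard_uncoloredPendants_le_applyMove G c v x a
  have hu' : applyMove c x a u = none := by rwa [applyMove_of_ne (Ne.symm hxu)]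
  have hv' : applyMove c x a v = none := by rwa [applyMove_of_ne (Ne.symm hxv)]
  generalize applyMove c x a = c' at *
  obtain ⟨w, hw, hwv⟩ := exists_ne_of_one_lt_ncard (s := uncoloredPendants G c' u) (by omega) v
  obtain ⟨e, he⟩ := exists_card_le_ncard_insert_add (n := 1) (s := Phi G c' u) <| by
    have := ncard_le_ncard (inter_subset_left (s := Phi G c' u) (t := Phi G c' v))
    omega
  refine .bobMove c' w e (legalMove_of_mem_uncoloredPendants hw hu' e)
    (.alice_of_card_le_ncard_Phi huv ?_ ?_ ?_ ?_ ?_ ?_)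
  · rwa [applyMove_of_ne (G.ne_of_adj hw.1)]
  · rwa [applyMove_of_ne hwv.symm]
  · have := ncard_inter_Phi_le_applyMove G hw.2.2 u v e
    omega
  · rwa [Phi_applyMove_of_adj hw.2.2 hw.1]
  · have := ncard_uncoloredPendants_le_applyMove G c' u w e
    omega
  · have := ncard_uncoloredPendants_le_applyMove G c' v w e
    omega

end Pendants

end GCN

open GCN in
theorem statement4_general {V : Type} [Fintype V] [DecidableEq V]
    (G : SimpleGraph V) [DecidableRel G.Adj]
    (c : V → Option (Fin 4))
    (u v : V) (huv : G.Adj u v)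
    (hu : c u = none) (hv : c v = none)
    (hleavesu : 8 ≤ {w : V | G.Adj u w ∧ G.degree w = 1 ∧ c w = none}.ncard)
    (hleavesv : 8 ≤ {w : V | G.Adj v w ∧ G.degree w = 1 ∧ c w = none}.ncard)
    (hPhi : 2 ≤ (Phi G c u ∩ Phi G c v).ncard) :
    BobWins G .alice c := by
  have hcard : Nat.card (Fin 4) = 4 := Nat.card_fin 4
  exact .alice_of_card_le_ncard_inter_Phi huv hu hv (by omega)
    (le_trans (by norm_num) hleavesu) (le_trans (by norm_num) hleavesv)

open GCN in
/-- With 4 colors (`Fin 4`), suppose the position `c` is a partial proper coloring, Alice to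
move, and `G` contains an edge `uv` with `u, v` uncolored, both of degree at least 2 and both
with at least 8 uncolored pendant neighbors.  If `|Φ(u) ∩ Φ(v)| ≥ 2`, then Bob wins. -/
theorem statement4 {V : Type} [Fintype V] [DecidableEq V]
    (G : SimpleGraph V) [DecidableRel G.Adj]
    (c : V → Option (Fin 4)) (hc : ProperPartial G c)
    (u v : V) (huv : G.Adj u v)
    (hu : c u = none) (hv : c v = none)
    (hdegu : 2 ≤ G.degree u) (hdegv : 2 ≤ G.degree v)
    (hleavesu : 8 ≤ {w : V | G.Adj u w ∧ G.degree w = 1 ∧ c w = none}.ncard)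
    (hleavesv : 8 ≤ {w : V | G.Adj v w ∧ G.degree w = 1 ∧ c w = none}.ncard)
    (hPhi : 2 ≤ (Phi G c u ∩ Phi G c v).ncard) :
    BobWins G .alice c :=
  statement4_general G c u v huv hu hv hleavesu hleavesv hPhi
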